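/- In the graph G_n (n ≥ 2) defined below, the set {u₁, …, u_n} is a connected dominating set, and every connected dominating set of G_n has at least n vertices; hence γ_c(G_n) = n. -/
import Mathlib


open SimpleGraph

variable {V W : Type*}

/-- Closed neighborhood of a vertex. -/
def closedNbhd (G : SimpleGraph V) (v : V) : Set V := insert v (G.neighborSet v)

/-- `C` is a dominating set of `G`. -/
def IsDomSet (G : SimpleGraph V) (C : Set V) : Prop :=
  ∀ v : V, v ∈ C ∨ ∃ c ∈ C, G.Adj c v

/-- `C` is a connected dominating set of `G`. -/
def IsConnDomSet (G : SimpleGraph V) (C : Set V) : Prop :=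
  IsDomSet G C ∧ (G.induce C).Connected

/-- The connected domination number. -/
noncomputable def gammaC (G : SimpleGraph V) : ℕ :=
  sInf {n | ∃ C : Set V, IsConnDomSet G C ∧ C.ncard = n}

/-- Base relation for the graph `G_n`: `Sum.inl i` is the vertex `u_i`, and
`Sum.inr (k, t)` is `x_{t+1}`, `y_{t+1}`, `z_{t+1}` for `k = 0, 1, 2`. -/
def GnRel (n : ℕ) :
    (Fin (n + 1) ⊕ (Fin 3 × Fin (n - 1))) → (Fin (n + 1) ⊕ (Fin 3 × Fin (n - 1))) → Prop
  | Sum.inl i, Sum.inl j => i.val + 1 = j.val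
  | Sum.inl i, Sum.inr (k, t) => (k = 0 ∧ i.val = t.val + 1) ∨ i.val = t.val + 2
  | Sum.inr (k, t), Sum.inr (k', t') => t = t' ∧ k.val + 1 = k'.val
  | Sum.inr _, Sum.inl _ => False

/-- The graph `G_n`. -/
def Gn (n : ℕ) : SimpleGraph (Fin (n + 1) ⊕ (Fin 3 × Fin (n - 1))) :=
  SimpleGraph.fromRel (GnRel n)

lemma gn_adj {n : ℕ} {a b : Fin (n + 1) ⊕ (Fin 3 × Fin (n - 1))} :
    (Gn n).Adj a b ↔ a ≠ b ∧ (GnRel n a b ∨ GnRel n b a) := by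
  simp [Gn, SimpleGraph.fromRel_adj]

/-- classifier used for the lower bound -/
def gnPhi {n : ℕ} : (Fin (n + 1) ⊕ (Fin 3 × Fin (n - 1))) → ℕ
  | Sum.inl j => j.val - 1
  | Sum.inr (_, t) => t.val + 1

theorem stmt_10 (n : ℕ) (hn : 2 ≤ n) :
    IsConnDomSet (Gn n) {v | ∃ i : Fin (n + 1), 1 ≤ i.val ∧ v = Sum.inl i} ∧
    (∀ C, IsConnDomSet (Gn n) C → n ≤ C.ncard) ∧
    gammaC (Gn n) = n := by
  set S : Set (Fin (n + 1) ⊕ (Fin 3 × Fin (n - 1))) :=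
    {v | ∃ i : Fin (n + 1), 1 ≤ i.val ∧ v = Sum.inl i} with hS
  -- S is a dominating set
  have hdomS : IsDomSet (Gn n) S := by
    intro v
    match v with
    | Sum.inl i =>
      by_cases h1 : 1 ≤ i.val
      · exact Or.inl ⟨i, h1, rfl⟩
      · have hi0 : i.val = 0 := by omega
        refine Or.inr ⟨Sum.inl ⟨1, by omega⟩, ⟨⟨1, by omega⟩, by simp, rfl⟩, ?_⟩
        rw [gn_adj]
        constructor
        · intro h
          have := Sum.inl.inj h
          have : (1 : ℕ) = i.val := congrArg Fin.val this
          omega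
        · right; show i.val + 1 = 1; omega
    | Sum.inr (k, t) =>
      refine Or.inr ⟨Sum.inl ⟨t.val + 2, by omega⟩, ⟨⟨t.val + 2, by omega⟩, by simp, rfl⟩, ?_⟩
      rw [gn_adj]
      exact ⟨by simp, Or.inl (Or.inr rfl)⟩
  -- S is connected
  have hadj_step : ∀ (j : ℕ) (h1 : j + 1 < n + 1),
      (Gn n).Adj (Sum.inl ⟨j, by omega⟩) (Sum.inl ⟨j + 1, h1⟩) := by
    intro j h1
    rw [gn_adj]
    constructor
    · intro h
      have := congrArg Fin.val (Sum.inl.inj h)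
      simp at this
    · left; rfl
  have hmemS : ∀ (i : Fin (n + 1)), 1 ≤ i.val → Sum.inl i ∈ S := fun i hi => ⟨i, hi, rfl⟩
  have base : ((Gn n).induce S) ≠ ⊥ ∨ True := Or.inr trivial
  set b : ((Gn n).induce S).support ⊕ Unit := Sum.inr () with hb
  have hconnS : ((Gn n).induce S).Connected := by
    rw [SimpleGraph.connected_iff]
    refine ⟨?_, ⟨⟨Sum.inl ⟨1, by omega⟩, hmemS ⟨1, by omega⟩ (by simp)⟩⟩⟩
    -- preconnected: every vertex reachable from u_1
    have claim : ∀ (j : ℕ) (i : Fin (n + 1)) (hji : i.val = j) (h1 : 1 ≤ i.val),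
        ((Gn n).induce S).Reachable ⟨Sum.inl i, hmemS i h1⟩
          ⟨Sum.inl ⟨1, by omega⟩, hmemS ⟨1, by omega⟩ (by simp)⟩ := by
      intro j
      induction j with
      | zero => intro i hji h1; omega
      | succ m ih =>
        intro i hji h1
        by_cases hm : m = 0
        · have hi1 : i = ⟨1, by omega⟩ := Fin.ext (show i.val = 1 by omega)
          have heq : (⟨Sum.inl i, hmemS i h1⟩ : {x // x ∈ S}) =
              ⟨Sum.inl ⟨1, by omega⟩, hmemS ⟨1, by omega⟩ (by simp)⟩ :=
            Subtype.ext (congrArg Sum.inl hi1)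
          rw [heq]
        · have hmn : m + 1 < n + 1 := by omega
          have hadj : ((Gn n).induce S).Adj
              ⟨Sum.inl ⟨m, by omega⟩, hmemS ⟨m, by omega⟩ (show (1:ℕ) ≤ m by omega)⟩
              ⟨Sum.inl ⟨m + 1, hmn⟩, hmemS ⟨m + 1, hmn⟩ (show (1:ℕ) ≤ m + 1 by omega)⟩ := by
            simp only [SimpleGraph.comap_adj, Function.Embedding.coe_subtype]
            exact hadj_step m hmn
          have hi : i = ⟨m + 1, hmn⟩ := Fin.ext hji
          have heq : (⟨Sum.inl i, hmemS i h1⟩ : {x // x ∈ S}) =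
              ⟨Sum.inl ⟨m + 1, hmn⟩, hmemS ⟨m + 1, hmn⟩ (show (1:ℕ) ≤ m + 1 by omega)⟩ :=
            Subtype.ext (congrArg Sum.inl hi)
          rw [heq]
          exact (hadj.symm.reachable).trans
            (ih ⟨m, by omega⟩ rfl (show (1:ℕ) ≤ m by omega))
    intro a c
    obtain ⟨va, ia, hia, rfl⟩ := a
    obtain ⟨vc, ic, hic, rfl⟩ := c
    exact (claim ia.val ia rfl hia).trans (claim ic.val ic rfl hic).symm
  have hCDS_S : IsConnDomSet (Gn n) S := ⟨hdomS, hconnS⟩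
  -- S has cardinality n
  have hScard : S.ncard = n := by
    have hrange : S = Set.range (fun j : Fin n => (Sum.inl j.succ :
        Fin (n + 1) ⊕ (Fin 3 × Fin (n - 1)))) := by
      ext v
      constructor
      · rintro ⟨i, hi, rfl⟩
        exact ⟨⟨i.val - 1, by omega⟩,
          congrArg Sum.inl (Fin.ext (show (i.val - 1) + 1 = i.val by omega))⟩
      · rintro ⟨j, rfl⟩
        exact ⟨j.succ, show (1:ℕ) ≤ j.val + 1 by omega, rfl⟩
    have hinj : Function.Injective (fun j : Fin n => (Sum.inl j.succ :
        Fin (n + 1) ⊕ (Fin 3 × Fin (n - 1)))) := by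
      intro a b h
      simp only [Sum.inl.injEq] at h
      exact Fin.succ_injective _ h
    rw [hrange, ← Set.image_univ, Set.ncard_image_of_injective _ hinj, Set.ncard_univ,
      Nat.card_eq_fintype_card, Fintype.card_fin]
  -- lower bound
  have hlower : ∀ C, IsConnDomSet (Gn n) C → n ≤ C.ncard := by
    intro C hC
    obtain ⟨hdom, -⟩ := hC
    have hex : ∀ i : Fin n, ∃ v ∈ C, gnPhi v = i.val := by
      intro i
      rcases Nat.eq_zero_or_pos i.val with h0 | hpos
      · -- use domination of u_0
        rcases hdom (Sum.inl ⟨0, by omega⟩) with h | ⟨c, hc, hadj⟩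
        · exact ⟨_, h, by simp [gnPhi, h0]⟩
        · refine ⟨c, hc, ?_⟩
          rw [gn_adj] at hadj
          obtain ⟨-, hrel⟩ := hadj
          match c with
          | Sum.inl j =>
            rcases hrel with h | h
            · exact absurd h (by simp [GnRel])
            · have : (1 : ℕ) = j.val := h
              simp [gnPhi]; omega
          | Sum.inr (k, t) =>
            rcases hrel with h | h
            · exact absurd h (by simp [GnRel])
            · rcases h with ⟨-, h⟩ | h <;> simp at h
      · -- use domination of z_i, i.e. Sum.inr (2, ⟨i.val - 1⟩)
        have ht : i.val - 1 < n - 1 := by omega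
        set t₀ : Fin (n - 1) := ⟨i.val - 1, ht⟩ with ht₀
        have hv : t₀.val = i.val - 1 := rfl
        rcases hdom (Sum.inr (2, t₀)) with h | ⟨c, hc, hadj⟩
        · exact ⟨_, h, by simp only [gnPhi, hv]; omega⟩
        · refine ⟨c, hc, ?_⟩
          rw [gn_adj] at hadj
          obtain ⟨-, hrel⟩ := hadj
          match c with
          | Sum.inl j =>
            rcases hrel with h | h
            · rcases h with ⟨h2, -⟩ | h
              · exact absurd (congrArg Fin.val h2) (by simp)
              · simp only [gnPhi]; omega
            · exact absurd h (by simp [GnRel])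
          | Sum.inr (k, t') =>
            rcases hrel with ⟨h1, h2⟩ | ⟨h1, h2⟩
            · subst h1; simp only [gnPhi]; omega
            · simp at h2; omega
    choose f hfC hfphi using hex
    have hinj : Function.Injective f := by
      intro a c h
      have : (a : Fin n).val = c.val := by rw [← hfphi a, ← hfphi c, h]
      exact Fin.ext this
    calc n = (Set.range f).ncard := by
            rw [← Set.image_univ, Set.ncard_image_of_injective _ hinj, Set.ncard_univ,
              Nat.card_eq_fintype_card, Fintype.card_fin]
      _ ≤ C.ncard := Set.ncard_le_ncard (Set.range_subset_iff.2 hfC) (Set.toFinite C)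
  refine ⟨hCDS_S, hlower, ?_⟩
  have hmem : n ∈ {m | ∃ C, IsConnDomSet (Gn n) C ∧ C.ncard = m} := ⟨S, hCDS_S, hScard⟩
  refine le_antisymm (Nat.sInf_le hmem) ?_
  obtain ⟨C, hC, hcard⟩ := Nat.sInf_mem ⟨n, hmem⟩
  rw [gammaC, ← hcard]
  exact hlower C hC
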